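/- Let 𝒮 be an essentially small triangulated category and G an object of 𝒮 such that there exists e ∈ ℕ with the property that every X ∈ 𝒮 satisfying Hom(X, G[j]) = 0 for all j ≤ -1 belongs to ⟨G⟩^{(-∞,e]} (i.e. fd(𝒮^op, G^op) < ∞). Then for every bounded t-structure (𝒮^{≤0}, 𝒮^{≥0}) on 𝒮 there exist r, s ∈ ℕ with ⟨G⟩^{(-∞,-r]} ⊆ 𝒮^{≤0} ⊆ ⟨G⟩^{(-∞,s]}. -/

import Mathlib

open CategoryTheory Limits Pretriangulated

universe v u

namespace Paper

variable (C : Type u) [Category.{v} C] [HasZeroObject C] [HasShift C ℤ]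
  [Preadditive C] [∀ n : ℤ, (shiftFunctor C n).Additive] [Pretriangulated C]

/-- `Z` is a direct sum of `X` and `Y`. -/
def IsDirSum {C : Type u} [Category.{v} C] [Preadditive C] (Z X Y : C) : Prop :=
  ∃ (i₁ : X ⟶ Z) (i₂ : Y ⟶ Z) (p₁ : Z ⟶ X) (p₂ : Z ⟶ Y),
    i₁ ≫ p₁ = 𝟙 X ∧ i₂ ≫ p₂ = 𝟙 Y ∧ i₁ ≫ p₂ = 0 ∧ i₂ ≫ p₁ = 0 ∧
    p₁ ≫ i₁ + p₂ ≫ i₂ = 𝟙 Z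

/-- The extension `A * B` of two classes of objects. -/
def star (A B : Set C) : Set C :=
  {Z | ∃ (X Y : C) (f : X ⟶ Z) (g : Z ⟶ Y) (h : Y ⟶ (X⟦(1:ℤ)⟧ : C)),
      X ∈ A ∧ Y ∈ B ∧ Triangle.mk f g h ∈ distTriang C}

/-- Closure of a class of objects under finite direct sums and isomorphism. -/
inductive addClos (A : Set C) : C → Prop
  | of {X Y : C} (e : X ≅ Y) (hY : Y ∈ A) : addClos A X
  | zero {X : C} (hX : IsZero X) : addClos A X
  | dirSum {Z X Y : C} (hX : addClos A X) (hY : addClos A Y) (h : IsDirSum Z X Y) :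
      addClos A Z

/-- `coprodN A n` is `coprod_n (A)`; by convention `coprodN A 0` consists of zero objects. -/
def coprodN (A : Set C) : ℕ → Set C
  | 0 => {X | IsZero X}
  | 1 => setOf (addClos C A)
  | (n+2) => star C (setOf (addClos C A)) (coprodN A (n+1))

/-- Direct summands of objects in `A`. -/
def smd (A : Set C) : Set C := {X | ∃ (Z Y : C), Z ∈ A ∧ IsDirSum Z X Y}

/-- The class `G[I] = {G[-i] : i ∈ I}` (up to isomorphism). -/
def shiftsOf (G : C) (I : Set ℤ) : Set C :=
  {X | ∃ i ∈ I, Nonempty (X ≅ (G⟦(-i : ℤ)⟧ : C))}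

/-- `⟨G⟩ₙ^I := smd (coprodₙ (G[I]))`. -/
def genN (G : C) (I : Set ℤ) (n : ℕ) : Set C := smd C (coprodN C (shiftsOf C G I) n)

/-- `⟨G⟩^I := ⋃_{n > 0} ⟨G⟩ₙ^I`. -/
def gen (G : C) (I : Set ℤ) : Set C := {X | ∃ n : ℕ, X ∈ genN C G I (n+1)}

/-- The right orthogonal `G[I]^⊥`. -/
def rPerpShifts (G : C) (I : Set ℤ) : Set C :=
  {Y | ∀ i ∈ I, ∀ f : (G⟦(-i : ℤ)⟧ : C) ⟶ Y, f = 0}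

/-- `fd(𝒮, G) ≤ m` : `G(-∞,-1]^⊥ ⊆ ⟨G⟩^{[0,∞)}[m] = ⟨G⟩^{[-m,∞)}`. -/
def fdLE (G : C) (m : ℤ) : Prop :=
  ∀ X ∈ rPerpShifts C G (Set.Iic (-1)), X ∈ gen C G (Set.Ici (-m))

/-- `fd(𝒮ᵒᵖ, Gᵒᵖ) ≤ m`, expressed inside `𝒮`. -/
def fdOpLE (G : C) (m : ℤ) : Prop :=
  ∀ X : C, (∀ j : ℤ, j ≤ -1 → ∀ f : X ⟶ (G⟦j⟧ : C), f = 0) →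
    X ∈ gen C G (Set.Iic m)

/-- A t-structure on `C`, given by its aisle `le = 𝒮^{≤0}` and coaisle `ge = 𝒮^{≥0}`. -/
structure TStructure where
  le : Set C
  ge : Set C
  le_iso : ∀ ⦃X Y : C⦄, (X ≅ Y) → X ∈ le → Y ∈ le
  ge_iso : ∀ ⦃X Y : C⦄, (X ≅ Y) → X ∈ ge → Y ∈ ge
  le_shift : ∀ X ∈ le, (X⟦(1:ℤ)⟧ : C) ∈ le
  ge_shift : ∀ X ∈ ge, (X⟦(-1:ℤ)⟧ : C) ∈ ge
  hom_zero : ∀ X ∈ le, ∀ Y ∈ ge, ∀ f : (X⟦(1:ℤ)⟧ : C) ⟶ Y, f = 0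
  triangle : ∀ X : C, ∃ (A B : C) (_ : A ∈ le) (_ : B ∈ ge)
      (f : ((A⟦(1:ℤ)⟧ : C)) ⟶ X) (g : X ⟶ B) (h : B ⟶ ((A⟦(1:ℤ)⟧ : C)⟦(1:ℤ)⟧)),
      Triangle.mk f g h ∈ distTriang C

variable {C}

/-- bounded above: `𝒮 = ⋃ₙ 𝒮^{≤n}`. -/
def TStructure.BoundedAbove (T : TStructure C) : Prop :=
  ∀ X : C, ∃ n : ℕ, (X⟦(n : ℤ)⟧ : C) ∈ T.le

/-- bounded below: `𝒮 = ⋃ₙ 𝒮^{≥-n}`. -/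
def TStructure.BoundedBelow (T : TStructure C) : Prop :=
  ∀ X : C, ∃ n : ℕ, (X⟦(-(n : ℤ))⟧ : C) ∈ T.ge

/-- bounded t-structure. -/
def TStructure.Bounded (T : TStructure C) : Prop :=
  T.BoundedAbove ∧ T.BoundedBelow

/-- A good metric on `C`. -/
structure IsGoodMetric (M : ℕ → Set C) : Prop where
  zero_mem : ∀ n : ℕ, ∀ X : C, IsZero X → X ∈ M n
  ext : ∀ n : ℕ, star C (M n) (M n) ⊆ M n
  shift_neg : ∀ n : ℕ, ∀ X ∈ M (n+1), (X⟦(-1:ℤ)⟧ : C) ∈ M n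
  mono : ∀ n : ℕ, ∀ X ∈ M (n+1), X ∈ M n
  shift_pos : ∀ n : ℕ, ∀ X ∈ M (n+1), (X⟦(1:ℤ)⟧ : C) ∈ M n

variable (C)

/-- A chain of morphisms indexed by `ℕ`. -/
structure Chain where
  X : ℕ → C
  f : ∀ n : ℕ, X n ⟶ X (n+1)

/-- `Z` is a cone of `f : A ⟶ B`. -/
def IsConeOf {A B : C} (Z : C) (f : A ⟶ B) : Prop :=
  ∃ (g : B ⟶ Z) (h : Z ⟶ (A⟦(1:ℤ)⟧ : C)), Triangle.mk f g h ∈ distTriang C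

variable {C}

/-- Cauchy sequence with respect to a (good) metric `M`. -/
def Chain.IsCauchy (c : Chain C) (M : ℕ → Set C) : Prop :=
  ∀ i : ℕ, ∃ N : ℕ, ∀ j : ℕ, N ≤ j → ∃ Z : C, IsConeOf C Z (c.f j) ∧ Z ∈ M i

/-!
The aisle `𝒮^{≤0}` is the class of objects `X` with `X⟦1⟧` left orthogonal to `𝒮^{≥0}`, so it is
closed under finite sums, summands, extensions and positive shifts. Boundedness puts `G⟦r⟧` in
`𝒮^{≤0}` for some `r`, hence all of `G(-∞,-r]` and then `⟨G⟩^{(-∞,-r]}` lie in the aisle.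
Conversely `G⟦-m⟧ ∈ 𝒮^{≥0}` for some `m`, so for `X ∈ 𝒮^{≤0}` the object `X⟦m⟧` has no maps to
`G⟦j⟧`, `j ≤ -1`; by `fd(𝒮ᵒᵖ, Gᵒᵖ) ≤ e` it lies in `⟨G⟩^{(-∞,e]}`, and `X ∈ ⟨G⟩^{(-∞,e+m]}`.
-/

section Preadditive

variable {C : Type u} [Category.{v} C] [Preadditive C]

lemma IsDirSum.map {D : Type*} [Category D] [Preadditive D] {Z X Y : C} (F : C ⥤ D) [F.Additive]
    (h : IsDirSum Z X Y) : IsDirSum (F.obj Z) (F.obj X) (F.obj Y) := by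
  obtain ⟨i₁, i₂, p₁, p₂, h₁, h₂, h₃, h₄, h₅⟩ := h
  refine ⟨F.map i₁, F.map i₂, F.map p₁, F.map p₂, ?_, ?_, ?_, ?_, ?_⟩ <;>
    simp only [← F.map_comp, ← F.map_add, h₁, h₂, h₃, h₄, h₅, F.map_id, F.map_zero]

lemma IsDirSum.of_iso {Z Z' X Y : C} (e : Z ≅ Z') (h : IsDirSum Z X Y) : IsDirSum Z' X Y := by
  obtain ⟨i₁, i₂, p₁, p₂, h₁, h₂, h₃, h₄, h₅⟩ := h
  refine ⟨i₁ ≫ e.hom, i₂ ≫ e.hom, e.inv ≫ p₁, e.inv ≫ p₂, ?_, ?_, ?_, ?_, ?_⟩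
  · simp [h₁]
  · simp [h₂]
  · simp [h₃]
  · simp [h₄]
  · simpa [Preadditive.comp_add, Preadditive.add_comp] using
      congrArg (fun φ => e.inv ≫ φ ≫ e.hom) h₅

lemma IsDirSum.iso_left {Z X X' Y : C} (e : X ≅ X') (h : IsDirSum Z X Y) : IsDirSum Z X' Y := by
  obtain ⟨i₁, i₂, p₁, p₂, h₁, h₂, h₃, h₄, h₅⟩ := h
  refine ⟨e.inv ≫ i₁, i₂, p₁ ≫ e.hom, p₂, ?_, h₂, ?_, ?_, ?_⟩
  · simp [reassoc_of% h₁]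
  · simp [h₃]
  · simp [reassoc_of% h₄]
  · simp [h₅]

lemma addClos_of_iso {A : Set C} {X Y : C} (e : X ≅ Y) (h : addClos C A Y) : addClos C A X := by
  cases h with
  | of e' hY => exact addClos.of (e ≪≫ e') hY
  | zero hY => exact addClos.zero (hY.of_iso e)
  | dirSum hX hY hsum => exact addClos.dirSum hX hY (hsum.of_iso e.symm)

variable [HasShift C ℤ] [∀ n : ℤ, (shiftFunctor C n).Additive]

lemma eq_zero_of_shift_hom_eq_zero {X Y : C} {a b a' b' : ℤ} (n : ℤ) (ha : a + n = a')
    (hb : b + n = b') (h : ∀ g : (X⟦a'⟧ : C) ⟶ (Y⟦b'⟧ : C), g = 0) (f : (X⟦a⟧ : C) ⟶ (Y⟦b⟧ : C)) :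
    f = 0 := by
  apply (shiftFunctor C n).map_injective
  simpa using h ((shiftFunctorAdd' C a n a' ha).hom.app X ≫ f⟦n⟧' ≫
    (shiftFunctorAdd' C b n b' hb).inv.app Y)

lemma addClos_shift {A A' : Set C} (n : ℤ) (hA : ∀ Y ∈ A, addClos C A' (Y⟦n⟧ : C))
    {X : C} (h : addClos C A X) : addClos C A' (X⟦n⟧ : C) := by
  induction h with
  | of e hY => exact addClos_of_iso ((shiftFunctor C n).mapIso e) (hA _ hY)
  | zero hX => exact addClos.zero ((shiftFunctor C n).map_isZero hX)
  | dirSum _ _ hsum ihX ihY => exact addClos.dirSum ihX ihY (hsum.map (shiftFunctor C n))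

end Preadditive

section Triangulated

variable {C : Type u} [Category.{v} C] [HasZeroObject C] [HasShift C ℤ]
  [Preadditive C] [∀ n : ℤ, (shiftFunctor C n).Additive] [Pretriangulated C]

structure IsExtSummandClosed (P : Set C) : Prop where
  iso : ∀ ⦃X Y : C⦄, (X ≅ Y) → Y ∈ P → X ∈ P
  zero : ∀ ⦃X : C⦄, IsZero X → X ∈ P
  dirSum : ∀ ⦃Z X Y : C⦄, IsDirSum Z X Y → X ∈ P → Y ∈ P → Z ∈ P
  summand : ∀ ⦃Z X Y : C⦄, IsDirSum Z X Y → Z ∈ P → X ∈ P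
  ext : star C P P ⊆ P

namespace IsExtSummandClosed

variable {P : Set C}

lemma addClos_mem (hP : IsExtSummandClosed P) {A : Set C} (hA : A ⊆ P) {X : C}
    (hX : addClos C A X) : X ∈ P := by
  induction hX with
  | of e hY => exact hP.iso e (hA hY)
  | zero hX => exact hP.zero hX
  | dirSum _ _ hsum ihX ihY => exact hP.dirSum hsum ihX ihY

lemma coprodN_subset (hP : IsExtSummandClosed P) {A : Set C} (hA : A ⊆ P) (n : ℕ) :
    coprodN C A (n + 1) ⊆ P := by
  induction n with
  | zero => exact fun X hX => hP.addClos_mem hA hX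
  | succ n ih =>
    rintro Z ⟨X, Y, f, g, h, hX, hY, hdist⟩
    exact hP.ext ⟨X, Y, f, g, h, hP.addClos_mem hA hX, ih hY, hdist⟩

lemma gen_subset (hP : IsExtSummandClosed P) {G : C} {I : Set ℤ} (hG : shiftsOf C G I ⊆ P) :
    gen C G I ⊆ P := by
  rintro X ⟨n, Z, Y, hZ, hsum⟩
  exact hP.summand hsum (hP.coprodN_subset hG n hZ)

lemma preimage_shift (hP : IsExtSummandClosed P) (n : ℤ) :
    IsExtSummandClosed {X | (X⟦n⟧ : C) ∈ P} where
  iso X Y e hY := hP.iso ((shiftFunctor C n).mapIso e) hY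
  zero X hX := hP.zero ((shiftFunctor C n).map_isZero hX)
  dirSum Z X Y h hX hY := hP.dirSum (h.map (shiftFunctor C n)) hX hY
  summand Z X Y h hZ := hP.summand (h.map (shiftFunctor C n)) hZ
  ext := by
    rintro Z ⟨X, Y, f, g, h, hX, hY, hdist⟩
    exact hP.ext ⟨_, _, _, _, _, hX, hY, Triangle.shift_distinguished _ hdist n⟩

end IsExtSummandClosed

def leftOrth (S : Set C) : Set C := {X | ∀ Y ∈ S, ∀ f : X ⟶ Y, f = 0}

lemma isExtSummandClosed_leftOrth (S : Set C) : IsExtSummandClosed (leftOrth S) where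
  iso X Y e hY B hB f := by
    rw [← e.hom_inv_id_assoc f, hY B hB (e.inv ≫ f), comp_zero]
  zero X hX B _ f := hX.eq_of_src f 0
  dirSum Z X Y h hX hY B hB f := by
    obtain ⟨i₁, i₂, p₁, p₂, -, -, -, -, hsum⟩ := h
    rw [← Category.id_comp f, ← hsum, Preadditive.add_comp, Category.assoc, Category.assoc,
      hX B hB (i₁ ≫ f), hY B hB (i₂ ≫ f), comp_zero, comp_zero, add_zero]
  summand Z X Y h hZ B hB f := by
    obtain ⟨i₁, -, p₁, -, h₁, -, -, -, -⟩ := h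
    rw [← Category.id_comp f, ← h₁, Category.assoc, hZ B hB (p₁ ≫ f), comp_zero]
  ext := by
    rintro Z ⟨X, Y, f, g, h, hX, hY, hdist⟩ B hB φ
    obtain ⟨ψ, rfl⟩ := Triangle.yoneda_exact₂ _ hdist φ (hX B hB _)
    rw [show ψ = 0 from hY B hB ψ]
    exact comp_zero

lemma star_shift (n : ℤ) {A B A' B' : Set C}
    (hA : ∀ X ∈ A, (X⟦n⟧ : C) ∈ A') (hB : ∀ Y ∈ B, (Y⟦n⟧ : C) ∈ B')
    {Z : C} (hZ : Z ∈ star C A B) : (Z⟦n⟧ : C) ∈ star C A' B' := by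
  obtain ⟨X, Y, f, g, h, hX, hY, hdist⟩ := hZ
  exact ⟨_, _, _, _, _, hA X hX, hB Y hY, Triangle.shift_distinguished _ hdist n⟩

lemma coprodN_shift (n : ℤ) {A A' : Set C} (hA : ∀ Y ∈ A, addClos C A' (Y⟦n⟧ : C))
    (k : ℕ) : ∀ X ∈ coprodN C A (k + 1), (X⟦n⟧ : C) ∈ coprodN C A' (k + 1) := by
  induction k with
  | zero => exact fun X hX => addClos_shift n hA hX
  | succ k ih => exact fun X => star_shift n (fun W => addClos_shift n hA) ih

lemma gen_of_iso {G : C} {I : Set ℤ} {X Y : C} (e : X ≅ Y) (hY : Y ∈ gen C G I) :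
    X ∈ gen C G I := by
  obtain ⟨k, Z, W, hZ, hsum⟩ := hY
  exact ⟨k, Z, W, hZ, hsum.iso_left e.symm⟩

lemma gen_Iic_shift {G : C} (a n : ℤ) {X : C} (hX : X ∈ gen C G (Set.Iic a)) :
    (X⟦n⟧ : C) ∈ gen C G (Set.Iic (a - n)) := by
  obtain ⟨k, Z, Y, hZ, hsum⟩ := hX
  have hshifts : ∀ W ∈ shiftsOf C G (Set.Iic a),
      addClos C (shiftsOf C G (Set.Iic (a - n))) (W⟦n⟧ : C) := by
    rintro W ⟨i, hi, ⟨e⟩⟩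
    exact addClos.of (Iso.refl _) ⟨i - n, sub_le_sub_right hi n,
      ⟨(shiftFunctor C n).mapIso e ≪≫ ((shiftFunctorAdd' C (-i) n (-(i - n)) (by ring)).app G).symm⟩⟩
  exact ⟨k, _, _, coprodN_shift n hshifts k Z hZ, hsum.map (shiftFunctor C n)⟩

lemma gen_Iic_of_shift {G : C} {a n : ℤ} {X : C} (hX : (X⟦n⟧ : C) ∈ gen C G (Set.Iic a)) :
    X ∈ gen C G (Set.Iic (a + n)) := by
  simpa using gen_of_iso ((shiftEquiv C n).unitIso.app X) (gen_Iic_shift a (-n) hX)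

end Triangulated

namespace TStructure

variable {C : Type u} [Category.{v} C] [HasZeroObject C] [HasShift C ℤ]
  [Preadditive C] [∀ n : ℤ, (shiftFunctor C n).Additive] [Pretriangulated C]
  (T : TStructure C)

lemma mem_le_iff (X : C) : X ∈ T.le ↔ (X⟦(1 : ℤ)⟧ : C) ∈ leftOrth T.ge := by
  refine ⟨fun hX => T.hom_zero X hX, fun hX => ?_⟩
  obtain ⟨A, B, hA, hB, f, g, h, hdist⟩ := T.triangle (X⟦(1 : ℤ)⟧ : C)
  -- `g = 0` makes `𝟙 B` factor through `h : B ⟶ A⟦1⟧⟦1⟧`, and `A⟦1⟧⟦1⟧ ⟶ B` vanishes.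
  obtain ⟨p, hp⟩ : ∃ p, 𝟙 B = h ≫ p :=
    Triangle.yoneda_exact₃ _ hdist (𝟙 B) ((hX B hB g).symm ▸ zero_comp)
  have hB0 : IsZero B := by
    rw [IsZero.iff_id_eq_zero, hp, T.hom_zero _ (T.le_shift A hA) B hB p, comp_zero]
  have : IsIso f := (Triangle.isZero₃_iff_isIso₁ _ hdist).1 hB0
  exact T.le_iso ((shiftFunctor C (1 : ℤ)).preimageIso (asIso f)) hA

lemma isExtSummandClosed_le : IsExtSummandClosed T.le := by
  convert (isExtSummandClosed_leftOrth T.ge).preimage_shift 1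
  exact Set.ext T.mem_le_iff

lemma shift_mem_le_of_le {X : C} {a b : ℤ} (hab : a ≤ b) (hX : (X⟦a⟧ : C) ∈ T.le) :
    (X⟦b⟧ : C) ∈ T.le := by
  induction b, hab using Int.leInduction with
  | base => exact hX
  | succ b _ ih => exact T.le_iso ((shiftFunctorAdd' C b 1 (b + 1) rfl).app X).symm (T.le_shift _ ih)

lemma shift_mem_ge_of_le {X : C} {a b : ℤ} (hba : b ≤ a) (hX : (X⟦a⟧ : C) ∈ T.ge) :
    (X⟦b⟧ : C) ∈ T.ge := by
  induction b, hba using Int.leInductionDown with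
  | base => exact hX
  | pred b _ ih =>
    exact T.ge_iso ((shiftFunctorAdd' C b (-1) (b - 1) (by ring)).app X).symm (T.ge_shift _ ih)

lemma gen_Iic_subset_le {G : C} {r : ℤ} (hr : (G⟦r⟧ : C) ∈ T.le) :
    gen C G (Set.Iic (-r)) ⊆ T.le := by
  refine T.isExtSummandClosed_le.gen_subset ?_
  rintro X ⟨i, hi, ⟨e⟩⟩
  exact T.le_iso e.symm (T.shift_mem_le_of_le (by simp at hi; omega) hr)

lemma le_subset_gen_Iic {G : C} {e m : ℤ} (hfd : fdOpLE C G e) (hm : (G⟦-m⟧ : C) ∈ T.ge) :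
    T.le ⊆ gen C G (Set.Iic (e + m)) := by
  intro X hX
  refine gen_Iic_of_shift (n := m) (hfd _ fun j hj f => ?_)
  -- Shifting by `1 - m` turns `f` into a map `X⟦1⟧ ⟶ G⟦j + 1 - m⟧` into the coaisle.
  exact eq_zero_of_shift_hom_eq_zero (1 - m) (by ring) rfl
    (T.hom_zero X hX _ (T.shift_mem_ge_of_le (by omega) hm)) f

end TStructure

/-- If `fd(𝒮ᵒᵖ, Gᵒᵖ) ≤ e` (every `X` with `Hom(X, G[j]) = 0` for all
`j ≤ -1` lies in `⟨G⟩^{(-∞,e]}`), then the aisle of any bounded t-structure on `𝒮` is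
squeezed between `⟨G⟩^{(-∞,-r]}` and `⟨G⟩^{(-∞,s]}` for some `r, s ∈ ℕ`. -/
theorem aisle_squeezed_of_fdOp_finite
    (C : Type u) [Category.{v} C] [HasZeroObject C] [HasShift C ℤ]
    [Preadditive C] [∀ n : ℤ, (shiftFunctor C n).Additive] [Pretriangulated C]
    (G : C) (e : ℕ) (hfdop : fdOpLE C G (e : ℤ))
    (T : TStructure C) (hT : T.Bounded) :
    ∃ r s : ℕ, gen C G (Set.Iic (-(r : ℤ))) ⊆ T.le ∧ T.le ⊆ gen C G (Set.Iic (s : ℤ)) := by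
  obtain ⟨hAbove, hBelow⟩ := hT
  obtain ⟨r, hr⟩ := hAbove G
  obtain ⟨m, hm⟩ := hBelow G
  refine ⟨r, e + m, T.gen_Iic_subset_le hr, ?_⟩
  push_cast
  exact T.le_subset_gen_Iic hfdop hm

end Paper
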